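/- arXiv:2506.18616 — 3 statements merged into one kernel-verified Lean document; each statement's English description precedes it below -/
import Mathlib

section
/- Let (X_n, A_n)_{n∈ℕ} be measurable spaces, (κ_n : ∏_{i≤n} X_i ⇝ X_{n+1})_{n∈ℕ} Markov kernels, and x_0 ∈ X_0. If (A_n)_{n∈ℕ} is a non-increasing sequence of measurable cylinders of ∏_{k≥1} X_k with empty intersection, then P_0(x_0, A_n) → 0 as n → ∞, where P_0(x_0,·) is the additive content on measurable cylinders induced by the kernels: P_0(x_0, B × ∏_{k>b} X_k) = η_{0,b}(x_0, B). Consequently P_0(x_0,·) is σ-sub-additive on measurable cylinders. -/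
open MeasureTheory ProbabilityTheory Preorder Filter
open scoped ENNReal ProbabilityTheory Topology

variable {X : ℕ → Type*} [∀ n, MeasurableSpace (X n)]

/-- Canonical map gluing a trajectory up to time `b` with a point of `X (b + 1)` into a
trajectory up to time `b + 1`. -/
def IicProdSucc (b : ℕ) (p : (Π i : Finset.Iic b, X i) × X (b + 1)) :
    Π i : Finset.Iic (b + 1), X i :=
  fun i ↦ if h : i.1 ≤ b then p.1 ⟨i.1, Finset.mem_Iic.2 h⟩
    else cast (congrArg X (Nat.le_antisymm (Finset.mem_Iic.1 i.2)
      (Nat.lt_of_not_le h))).symm p.2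

/-- The partial trajectory kernel `η_{a,b}` built from the kernels `κ n`: for `b ≤ a` it is the
deterministic kernel given by the restriction map, and `η_{a,b+1}` is obtained from `η_{a,b}` by
composing with the product of the identity kernel and `κ b`. -/
noncomputable def partialTraj (κ : ∀ n, Kernel (Π i : Finset.Iic n, X i) (X (n + 1))) (a : ℕ) :
    (b : ℕ) → Kernel (Π i : Finset.Iic a, X i) (Π i : Finset.Iic b, X i)
  | 0 => Kernel.deterministic (frestrictLe₂ (Nat.zero_le a)) (measurable_frestrictLe₂ _)
  | b + 1 =>
    if h : b + 1 ≤ a then Kernel.deterministic (frestrictLe₂ h) (measurable_frestrictLe₂ h)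
    else ((Kernel.id ×ₖ κ b) ∘ₖ partialTraj κ a b).map (IicProdSucc b)

/-- The kernel `η_{a,b} = κ_a ⊗ₖ … ⊗ₖ κ_{b-1}` from `Π i : Iic a, X i` to `Π i : Ioc a b, X i`,
realized as the restriction to the coordinates in `(a, b]` of the partial trajectory kernel. -/
noncomputable def iocTraj (κ : ∀ n, Kernel (Π i : Finset.Iic n, X i) (X (n + 1))) (a b : ℕ) :
    Kernel (Π i : Finset.Iic a, X i) (Π i : Finset.Ioc a b, X i) :=
  (partialTraj κ a b).map
    (fun y (i : Finset.Ioc a b) ↦ y ⟨i.1, Finset.mem_Iic.2 (Finset.mem_Ioc.1 i.2).2⟩)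

/-- The element of `Π i : Iic 0, X i` associated to a point `x₀ : X 0`. -/
def toIic0 (x₀ : X 0) : Π i : Finset.Iic 0, X i :=
  fun i ↦ cast (congrArg X (Nat.le_zero.1 (Finset.mem_Iic.1 i.2))).symm x₀

/-! The content `m` is the pullback, along the map `restrictPos` forgetting the coordinate `0`, of
Mathlib's Ionescu-Tulcea content `Kernel.trajContent κ x₀` on `Π n, X n`: once `partialTraj` is
identified with `Kernel.partialTraj`, both give the cylinder over `B ⊆ Π i ∈ (0, b], X i` the mass
`η_{0,b}(x₀, B)`. Continuity at `∅` and σ-subadditivity then transfer from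
`Kernel.trajContent_tendsto_zero` and `Kernel.isSigmaSubadditive_trajContent`, since preimages
commute with intersections and unions. -/

open Finset

lemma IicProdIoc_comp_prodMap_piSingleton (b : ℕ) :
    IicProdIoc (X := X) b (b + 1) ∘ Prod.map id (MeasurableEquiv.piSingleton b) =
      IicProdSucc b := by
  ext p ⟨i, hi⟩
  simp only [Function.comp_apply, IicProdIoc, IicProdSucc, Prod.map_fst, Prod.map_snd, id]
  split_ifs with h
  · rfl
  · obtain rfl : i = b + 1 := by have := mem_Iic.1 hi; omega
    rfl

lemma partialTraj_eq_kernel_partialTraj (κ : ∀ n, Kernel (Π i : Iic n, X i) (X (n + 1)))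
    [∀ n, IsSFiniteKernel (κ n)] (a b : ℕ) :
    partialTraj κ a b = Kernel.partialTraj κ a b := by
  induction b with
  | zero => rw [Kernel.partialTraj_zero]; rfl
  | succ b ih =>
    by_cases h : b + 1 ≤ a
    · rw [partialTraj, dif_pos h, Kernel.partialTraj_le h]
    · have e := (MeasurableEquiv.piSingleton (X := X) b).measurable
      rw [partialTraj, dif_neg h, ih, Kernel.partialTraj_succ_of_le (by omega),
        ← Kernel.map_id Kernel.id, Kernel.map_prod_map _ _ measurable_id e, Kernel.map_id,
        ← Kernel.map_comp,
        ← Kernel.map_comp_right _ (measurable_id.prodMap e) measurable_IicProdIoc,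
        IicProdIoc_comp_prodMap_piSingleton]

def restrictPos (ω : Π n, X n) (n : {n : ℕ // 0 < n}) : X n := ω n

-- `projIoc b ⁻¹' B` is definitionally the cylinder over `B` in the hypothesis `hm` of the theorem.
def projIoc (b : ℕ) (ω : Π n : {n : ℕ // 0 < n}, X n) (i : Ioc 0 b) : X i :=
  ω ⟨i, (mem_Ioc.1 i.2).1⟩

lemma exists_eq_projIoc_preimage {A : Set (Π n : {n : ℕ // 0 < n}, X n)}
    (hA : A ∈ measurableCylinders (fun n : {n : ℕ // 0 < n} ↦ X n)) :
    ∃ (b : ℕ) (B : Set (Π i : Ioc 0 b, X i)), MeasurableSet B ∧ A = projIoc b ⁻¹' B := by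
  obtain ⟨s, S, hS, rfl⟩ := (mem_measurableCylinders A).1 hA
  refine ⟨s.sup (fun i ↦ i.1),
    (fun (z : Π i : Ioc 0 (s.sup (fun i ↦ i.1)), X i) (j : s) ↦
      z ⟨j.1.1, mem_Ioc.2 ⟨j.1.2, le_sup j.2⟩⟩) ⁻¹' S,
    hS.preimage (measurable_pi_lambda _ fun _ ↦ measurable_pi_apply _), rfl⟩

omit [∀ n, MeasurableSpace (X n)] in
lemma restrictPos_preimage_projIoc_preimage (b : ℕ) (B : Set (Π i : Ioc 0 b, X i)) :
    restrictPos ⁻¹' (projIoc b ⁻¹' B) = cylinder (Iic b) (restrict₂ Ioc_subset_Iic_self ⁻¹' B) :=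
  rfl

lemma restrictPos_preimage_mem_measurableCylinders {A : Set (Π n : {n : ℕ // 0 < n}, X n)}
    (hA : A ∈ measurableCylinders (fun n : {n : ℕ // 0 < n} ↦ X n)) :
    restrictPos ⁻¹' A ∈ measurableCylinders X := by
  obtain ⟨b, B, hB, rfl⟩ := exists_eq_projIoc_preimage hA
  rw [restrictPos_preimage_projIoc_preimage]
  exact cylinder_mem_measurableCylinders _ _ (hB.preimage (measurable_restrict₂ _))

lemma iocTraj_eq_map_restrict₂ (κ : ∀ n, Kernel (Π i : Iic n, X i) (X (n + 1))) (a b : ℕ) :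
    iocTraj κ a b = (partialTraj κ a b).map (restrict₂ Ioc_subset_Iic_self) :=
  rfl

lemma iocTraj_apply_eq_trajContent (κ : ∀ n, Kernel (Π i : Iic n, X i) (X (n + 1)))
    [∀ n, IsMarkovKernel (κ n)] (x : Π i : Iic 0, X i) (b : ℕ) {B : Set (Π i : Ioc 0 b, X i)}
    (hB : MeasurableSet B) :
    iocTraj κ 0 b x B = Kernel.trajContent κ x (restrictPos ⁻¹' (projIoc b ⁻¹' B)) := by
  rw [restrictPos_preimage_projIoc_preimage,
    Kernel.trajContent_cylinder (hB.preimage (measurable_restrict₂ _)), iocTraj_eq_map_restrict₂,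
    Kernel.map_apply' _ (measurable_restrict₂ Ioc_subset_Iic_self) _ hB,
    partialTraj_eq_kernel_partialTraj]

lemma addContent_eq_trajContent (κ : ∀ n, Kernel (Π i : Iic n, X i) (X (n + 1)))
    [∀ n, IsMarkovKernel (κ n)] (x : Π i : Iic 0, X i)
    {m : AddContent ℝ≥0∞ (measurableCylinders (fun n : {n : ℕ // 0 < n} ↦ X n))}
    (hm : ∀ (b : ℕ) (B : Set (Π i : Ioc 0 b, X i)), MeasurableSet B →
      m (projIoc b ⁻¹' B) = iocTraj κ 0 b x B)
    {A : Set (Π n : {n : ℕ // 0 < n}, X n)}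
    (hA : A ∈ measurableCylinders (fun n : {n : ℕ // 0 < n} ↦ X n)) :
    m A = Kernel.trajContent κ x (restrictPos ⁻¹' A) := by
  obtain ⟨b, B, hB, rfl⟩ := exists_eq_projIoc_preimage hA
  rw [hm b B hB, iocTraj_apply_eq_trajContent κ x b hB]

/-- The additive content `P_0(x₀, ·)` induced by the kernels on the measurable cylinders of
`∏_{k ≥ 1} X_k` tends to `0` along every non-increasing sequence of measurable cylinders with
empty intersection; consequently it is σ-sub-additive on measurable cylinders. -/
theorem tendsto_zero_and_sigma_subadditive_content
    (κ : ∀ n, Kernel (Π i : Finset.Iic n, X i) (X (n + 1))) [∀ n, IsMarkovKernel (κ n)]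
    (x₀ : X 0)
    (m : AddContent ℝ≥0∞ (measurableCylinders (fun n : {n : ℕ // 0 < n} ↦ X n)))
    (hm : ∀ (b : ℕ) (B : Set (Π i : Finset.Ioc 0 b, X i)), MeasurableSet B →
      m (cylinder ((Finset.Ioc 0 b).subtype (fun n ↦ 0 < n))
          ((fun (z : Π j : ((Finset.Ioc 0 b).subtype (fun n ↦ 0 < n)), X j.1.1)
              (i : Finset.Ioc 0 b) ↦
            z ⟨⟨i.1, (Finset.mem_Ioc.1 i.2).1⟩, Finset.mem_subtype.2 i.2⟩) ⁻¹' B)) =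
        iocTraj κ 0 b (toIic0 x₀) B) :
    (∀ A : ℕ → Set (Π n : {n : ℕ // 0 < n}, X n),
      (∀ n, A n ∈ measurableCylinders (fun n : {n : ℕ // 0 < n} ↦ X n)) → Antitone A →
      (⋂ n, A n) = ∅ → Tendsto (fun n ↦ m (A n)) atTop (𝓝 0)) ∧
    (∀ A : ℕ → Set (Π n : {n : ℕ // 0 < n}, X n),
      (∀ n, A n ∈ measurableCylinders (fun n : {n : ℕ // 0 < n} ↦ X n)) →
      (⋃ n, A n) ∈ measurableCylinders (fun n : {n : ℕ // 0 < n} ↦ X n) →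
      m (⋃ n, A n) ≤ ∑' n, m (A n)) := by
  have hmA := fun {A} ↦ addContent_eq_trajContent κ (toIic0 x₀) hm (A := A)
  have hcyl := fun {A} ↦ restrictPos_preimage_mem_measurableCylinders (X := X) (A := A)
  refine ⟨fun A hA hanti hinter ↦ ?_, fun A hA hU ↦ ?_⟩
  · simp_rw [hmA (hA _)]
    refine Kernel.trajContent_tendsto_zero (fun n ↦ hcyl (hA n))
      (fun _ _ hij ↦ Set.preimage_mono (hanti hij)) ?_ _
    rw [← Set.preimage_iInter, hinter, Set.preimage_empty]
  · simp_rw [hmA hU, hmA (hA _), Set.preimage_iUnion]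
    refine Kernel.isSigmaSubadditive_trajContent κ _ (fun n ↦ hcyl (hA n)) ?_
    rw [← Set.preimage_iUnion]
    exact hcyl hU
end

section
/- Let (X_n, A_n)_{n∈ℕ} be measurable spaces and (κ_n : ∏_{i≤n} X_i ⇝ X_{n+1})_{n∈ℕ} Markov kernels. For all natural numbers a ≤ b ≤ c, the composition of partial-trajectory kernels satisfies η_{b,c} ∘ η_{a,b} = η_{a,c} (as Markov kernels from ∏_{i≤a} X_i to ∏_{i≤c} X_i). -/
open MeasureTheory ProbabilityTheory Preorder Filter
open scoped ENNReal ProbabilityTheory Topology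

variable {X : ℕ → Type*} [∀ n, MeasurableSpace (X n)]

section

variable (κ : ∀ n, Kernel (Π i : Finset.Iic n, X i) (X (n + 1)))

lemma partialTraj_le {a b : ℕ} (hba : b ≤ a) :
    partialTraj κ a b
      = Kernel.deterministic (frestrictLe₂ hba) (measurable_frestrictLe₂ hba) := by
  cases b with
  | zero => rfl
  | succ n => rw [partialTraj, dif_pos hba]

lemma partialTraj_self (b : ℕ) : partialTraj κ b b = Kernel.id := by
  rw [partialTraj_le κ le_rfl]
  rfl

lemma partialTraj_succ_of_le {a b : ℕ} (hab : a ≤ b) :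
    partialTraj κ a (b + 1) = ((Kernel.id ×ₖ κ b) ∘ₖ partialTraj κ a b).map (IicProdSucc b) := by
  rw [partialTraj, dif_neg (by omega)]

end

theorem partialTraj_comp_partialTraj_general (κ : ∀ n, Kernel (Π i : Finset.Iic n, X i) (X (n + 1)))
    {a b c : ℕ} (hab : a ≤ b) (hbc : b ≤ c) :
    partialTraj κ b c ∘ₖ partialTraj κ a b = partialTraj κ a c := by
  induction c, hbc using Nat.le_induction with
  | base => rw [partialTraj_self, Kernel.id_comp]
  | succ c hbc ih =>
    rw [partialTraj_succ_of_le κ hbc, partialTraj_succ_of_le κ (hab.trans hbc),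
      ← Kernel.map_comp, Kernel.comp_assoc, ih]

/-- Composition of partial trajectory kernels: for `a ≤ b ≤ c`, `η_{b,c} ∘ η_{a,b} = η_{a,c}`. -/
theorem partialTraj_comp_partialTraj (κ : ∀ n, Kernel (Π i : Finset.Iic n, X i) (X (n + 1)))
    [∀ n, IsMarkovKernel (κ n)] {a b c : ℕ} (hab : a ≤ b) (hbc : b ≤ c) :
    partialTraj κ b c ∘ₖ partialTraj κ a b = partialTraj κ a c :=
  partialTraj_comp_partialTraj_general κ hab hbc
end

section
/- Let (X_n, A_n)_{n∈ℕ} be measurable spaces, (κ_n : ∏_{i≤n} X_i ⇝ X_{n+1})_{n∈ℕ} Markov kernels, and a ∈ ℕ. For every x ∈ ∏_{i≤a} X_i, every b ≤ c, and every measurable set A ⊆ ∏_{a<i≤b} X_i, one has η_{a,c}(x, A × ∏_{b<i≤c} X_i) = η_{a,b}(x, A); i.e., the content P_a(x,·) on measurable cylinders (Definition of P_a) is well defined, independent of the representation of the cylinder. -/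
/-! Each step `η_{a,n} ↦ η_{a,n+1}` keeps the old coordinates and appends one drawn from the
Markov kernel `κ n`, so forgetting the new coordinate returns `η_{a,n}`. By induction, the
marginal of the partial trajectory kernel up to `c` on the coordinates up to `b` is the one up to
`b`, and restricting further to the coordinates in `(a, b]` gives the claim. -/

open MeasureTheory ProbabilityTheory Preorder Filter
open scoped ENNReal ProbabilityTheory Topology

variable {X : ℕ → Type*} [∀ n, MeasurableSpace (X n)]

lemma measurable_cast_congrArg {ι : Type*} {Y : ι → Type*} [∀ i, MeasurableSpace (Y i)]
    {i j : ι} (h : i = j) : Measurable (cast (congrArg Y h)) := by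
  subst h
  exact measurable_id

lemma measurable_IicProdSucc (b : ℕ) : Measurable (IicProdSucc (X := X) b) := by
  refine measurable_pi_lambda _ fun i ↦ ?_
  unfold IicProdSucc
  by_cases h : i.1 ≤ b
  · simp only [dif_pos h]
    exact (measurable_pi_apply _).comp measurable_fst
  · simp only [dif_neg h]
    exact (measurable_cast_congrArg (Nat.le_antisymm (Finset.mem_Iic.1 i.2)
      (Nat.lt_of_not_le h)).symm).comp measurable_snd

omit [∀ n, MeasurableSpace (X n)] in
lemma frestrictLe₂_comp_IicProdSucc (b : ℕ) :
    frestrictLe₂ (π := X) b.le_succ ∘ IicProdSucc b = Prod.fst := by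
  funext p
  ext i
  simp only [Function.comp_apply, frestrictLe₂_apply, IicProdSucc, dif_pos (Finset.mem_Iic.1 i.2)]

lemma partialTraj_of_le (κ : ∀ n, Kernel (Π i : Finset.Iic n, X i) (X (n + 1))) {a b : ℕ}
    (hba : b ≤ a) :
    partialTraj κ a b = Kernel.deterministic (frestrictLe₂ hba) (measurable_frestrictLe₂ _) := by
  cases b with
  | zero => rfl
  | succ n => rw [partialTraj, dif_pos hba]

lemma partialTraj_succ_map_frestrictLe₂ (κ : ∀ n, Kernel (Π i : Finset.Iic n, X i) (X (n + 1)))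
    [∀ n, IsMarkovKernel (κ n)] (a b : ℕ) :
    (partialTraj κ a (b + 1)).map (frestrictLe₂ b.le_succ) = partialTraj κ a b := by
  by_cases h : b + 1 ≤ a
  · rw [partialTraj_of_le κ h, partialTraj_of_le κ (b.le_succ.trans h),
      Kernel.deterministic_map (measurable_frestrictLe₂ _) (measurable_frestrictLe₂ _)]
    rfl
  · rw [partialTraj, dif_neg h,
      ← Kernel.map_comp_right _ (measurable_IicProdSucc b) (measurable_frestrictLe₂ _),
      frestrictLe₂_comp_IicProdSucc, Kernel.map_comp, ← Kernel.fst_eq, Kernel.fst_prod,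
      Kernel.id_comp]

lemma partialTraj_map_frestrictLe₂ (κ : ∀ n, Kernel (Π i : Finset.Iic n, X i) (X (n + 1)))
    [∀ n, IsMarkovKernel (κ n)] (a : ℕ) {b c : ℕ} (hbc : b ≤ c) :
    (partialTraj κ a c).map (frestrictLe₂ hbc) = partialTraj κ a b := by
  induction c, hbc using Nat.le_induction with
  | base => exact Kernel.map_id _
  | succ c hbc ih =>
    rw [← frestrictLe₂_comp_frestrictLe₂ hbc c.le_succ,
      Kernel.map_comp_right _ (measurable_frestrictLe₂ _) (measurable_frestrictLe₂ _),
      partialTraj_succ_map_frestrictLe₂, ih]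

lemma iocTraj_map_restrict₂ (κ : ∀ n, Kernel (Π i : Finset.Iic n, X i) (X (n + 1)))
    [∀ n, IsMarkovKernel (κ n)] (a : ℕ) {b c : ℕ} (hbc : b ≤ c) :
    (iocTraj κ a c).map (Finset.restrict₂ (Finset.Ioc_subset_Ioc_right hbc)) = iocTraj κ a b := by
  have hIoc : ∀ d, Measurable fun (y : Π i : Finset.Iic d, X i) (i : Finset.Ioc a d) ↦
      y ⟨i.1, Finset.mem_Iic.2 (Finset.mem_Ioc.1 i.2).2⟩ :=
    fun d ↦ measurable_pi_lambda _ fun i ↦ measurable_pi_apply _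
  rw [iocTraj, iocTraj, ← Kernel.map_comp_right _ (hIoc c) (Finset.measurable_restrict₂ _),
    ← partialTraj_map_frestrictLe₂ κ a hbc,
    ← Kernel.map_comp_right _ (measurable_frestrictLe₂ _) (hIoc b)]
  rfl

theorem iocTraj_cylinder_eq_general (κ : ∀ n, Kernel (Π i : Finset.Iic n, X i) (X (n + 1)))
    [∀ n, IsMarkovKernel (κ n)] (a : ℕ) (x : Π i : Finset.Iic a, X i)
    {b c : ℕ} (hbc : b ≤ c)
    {A : Set (Π i : Finset.Ioc a b, X i)} (hA : MeasurableSet A) :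
    iocTraj κ a c x (Finset.restrict₂ (Finset.Ioc_subset_Ioc_right hbc) ⁻¹' A) =
      iocTraj κ a b x A := by
  rw [← iocTraj_map_restrict₂ κ a hbc, Kernel.map_apply' _ (Finset.measurable_restrict₂ _) _ hA]

/-- The content `P_a(x, ·)` on measurable cylinders is well defined: the value does not
depend on the representation of the cylinder, i.e. for `a ≤ b ≤ c` and `A` a measurable set
of `∏_{a < i ≤ b} X_i`, `η_{a,c}(x, A × ∏_{b < i ≤ c} X_i) = η_{a,b}(x, A)`. -/
theorem iocTraj_cylinder_eq (κ : ∀ n, Kernel (Π i : Finset.Iic n, X i) (X (n + 1)))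
    [∀ n, IsMarkovKernel (κ n)] (a : ℕ) (x : Π i : Finset.Iic a, X i)
    {b c : ℕ} (hab : a ≤ b) (hbc : b ≤ c)
    {A : Set (Π i : Finset.Ioc a b, X i)} (hA : MeasurableSet A) :
    iocTraj κ a c x (Finset.restrict₂ (Finset.Ioc_subset_Ioc_right hbc) ⁻¹' A) =
      iocTraj κ a b x A :=
  iocTraj_cylinder_eq_general κ a x hbc hA
end
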